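/- arXiv:2209.03218 — 2 statements merged into one kernel-verified Lean document; each statement's English description precedes it below -/
import Mathlib

section
/- Let Σ̂ and Σ be N×N symmetric matrices, let S ⊆ {1,…,N} with cardinality |S| ≥ 1, and suppose the smallest eigenvalue of Σ satisfies Λ_min(Σ) ≥ Λ > 0. Suppose the entrywise max-norm bound ‖Σ̂ − Σ‖_max ≤ Λ/(32|S|) holds. Then for every z ∈ ℝ^N with ‖z_{S^c}‖_1 ≤ 3‖z_S‖_1 (where z_S denotes z with coordinates outside S set to zero), we have ‖z_S‖_1 ≤ sqrt(2|S| · zᵀΣ̂z / Λ). -/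
open Finset

theorem compatibility_on_CC {N : ℕ} (Sig Sighat : Matrix (Fin N) (Fin N) ℝ)
    (S : Finset (Fin N)) (Lam : ℝ)
    (hSigSymm : Sig.IsSymm) (hSighatSymm : Sighat.IsSymm)
    (hScard : 1 ≤ S.card) (hLam : 0 < Lam)
    (hmin : ∀ z : Fin N → ℝ, Lam * ∑ i, (z i) ^ 2 ≤ ∑ i, ∑ j, z i * Sig i j * z j)
    (hmax : ∀ i j, |Sighat i j - Sig i j| ≤ Lam / (32 * S.card)) :
    ∀ z : Fin N → ℝ,
      (∑ j ∈ Sᶜ, |z j|) ≤ 3 * ∑ j ∈ S, |z j| →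
      (∑ j ∈ S, |z j|) ≤
        Real.sqrt (2 * S.card * (∑ i, ∑ j, z i * Sighat i j * z j) / Lam) := by
  intro z hz
  set a := ∑ j ∈ S, |z j| with ha
  have ha0 : 0 ≤ a := Finset.sum_nonneg fun _ _ => abs_nonneg _
  set s := (S.card : ℝ) with hs
  have hs1 : (1:ℝ) ≤ s := Nat.one_le_cast.mpr hScard
  have hs0 : (0:ℝ) < s := lt_of_lt_of_le one_pos hs1
  set Q := ∑ i, ∑ j, z i * Sighat i j * z j with hQdef
  set T := ∑ i, |z i| with hT
  have hT0 : 0 ≤ T := Finset.sum_nonneg fun _ _ => abs_nonneg _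
  have hsum : T ≤ 4 * a := by
    have hsplit : (∑ j ∈ S, |z j|) + (∑ j ∈ Sᶜ, |z j|) = T := by
      rw [hT, ← Finset.sum_add_sum_compl S (fun i => |z i|)]
    linarith
  have hz2 : a ^ 2 ≤ s * ∑ i, (z i)^2 := by
    have h1 : a ^ 2 ≤ s * ∑ j ∈ S, (z j)^2 := by
      have := sq_sum_le_card_mul_sum_sq (s := S) (f := fun j => |z j|)
      simpa [sq_abs, ha, hs] using this
    have h2 : ∑ j ∈ S, (z j)^2 ≤ ∑ i, (z i)^2 :=
      Finset.sum_le_sum_of_subset_of_nonneg (Finset.subset_univ S)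
        (fun _ _ _ => sq_nonneg _)
    nlinarith
  set eps := Lam / (32 * s) with heps
  have heps0 : 0 ≤ eps := by positivity
  have hkey : ∀ i j, -(eps * (|z i| * |z j|)) ≤ z i * (Sighat i j - Sig i j) * z j := by
    intro i j
    have h := hmax i j
    have habs : |z i * (Sighat i j - Sig i j) * z j| ≤ eps * (|z i| * |z j|) := by
      rw [abs_mul, abs_mul]
      have h1 : |z i| * |Sighat i j - Sig i j| ≤ |z i| * eps :=
        mul_le_mul_of_nonneg_left h (abs_nonneg _)
      have h2 : |z i| * |Sighat i j - Sig i j| * |z j| ≤ |z i| * eps * |z j| :=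
        mul_le_mul_of_nonneg_right h1 (abs_nonneg _)
      nlinarith
    linarith [neg_abs_le (z i * (Sighat i j - Sig i j) * z j)]
  have hpert : (∑ i, ∑ j, z i * Sig i j * z j) - eps * T^2 ≤ Q := by
    have hdiff : Q - (∑ i, ∑ j, z i * Sig i j * z j)
        = ∑ i, ∑ j, z i * (Sighat i j - Sig i j) * z j := by
      rw [hQdef, ← Finset.sum_sub_distrib]
      refine Finset.sum_congr rfl fun i _ => ?_
      rw [← Finset.sum_sub_distrib]
      refine Finset.sum_congr rfl fun j _ => by ring
    have hbound : -(eps * T^2) ≤ ∑ i, ∑ j, z i * (Sighat i j - Sig i j) * z j := by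
      have h1 : eps * T^2 = ∑ i, ∑ j, eps * (|z i| * |z j|) := by
        rw [hT, sq, Finset.sum_mul_sum, Finset.mul_sum]
        refine Finset.sum_congr rfl fun i _ => ?_
        rw [Finset.mul_sum]
      rw [h1, ← Finset.sum_neg_distrib]
      refine Finset.sum_le_sum fun i _ => ?_
      rw [← Finset.sum_neg_distrib]
      exact Finset.sum_le_sum fun j _ => hkey i j
    linarith
  have hLamQ : Lam * a^2 ≤ 2 * s * Q := by
    have hmin' := hmin z
    have hseps : s * eps = Lam / 32 := by
      rw [heps]; field_simp
    have hT2 : T^2 ≤ 16 * a^2 := by nlinarith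
    have h1 : Lam * a^2 ≤ s * (∑ i, ∑ j, z i * Sig i j * z j) := by
      nlinarith [mul_le_mul_of_nonneg_left hmin' hs0.le,
        mul_le_mul_of_nonneg_left hz2 hLam.le]
    have h2 : s * (∑ i, ∑ j, z i * Sig i j * z j) ≤ s * Q + s * eps * T^2 := by
      nlinarith [mul_le_mul_of_nonneg_left hpert hs0.le]
    have h3 : s * eps * T^2 ≤ (Lam/32) * (16 * a^2) := by
      rw [hseps]
      exact mul_le_mul_of_nonneg_left hT2 (by positivity)
    nlinarith
  have hdiv : a^2 ≤ 2 * s * Q / Lam := by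
    rw [le_div_iff₀ hLam]
    linarith [hLamQ]
  calc a = Real.sqrt (a^2) := (Real.sqrt_sq ha0).symm
    _ ≤ Real.sqrt (2 * s * Q / Lam) := Real.sqrt_le_sqrt hdiv
end

section
/- Let y = Xβ + u with X ∈ ℝ^{T×N}, and let β̂ minimize b ↦ ‖y − Xb‖_2²/T + 2λ‖Wb‖_1 where W is the diagonal 0/1 matrix zeroing coordinates in 𝒮. Let S ⊆ {1,…,N} with 𝒮 ⊆ S. Suppose the empirical process bound max_j |∑_{t=1}^T u_t x_{j,t}| ≤ Tλ/4 holds. Then ‖X(β̂ − β)‖_2²/T ≤ (5λ/4)‖(β̂ − β)_S‖_1 − (3λ/4)‖(β̂ − β)_{S^c}‖_1 + 2λ‖β_{S^c}‖_1. -/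
open Finset Matrix

/-- The weighted lasso objective with weights zeroing out coordinates in `𝒮`. -/
noncomputable def wlassoObj {T N : ℕ} (y : Fin T → ℝ) (X : Matrix (Fin T) (Fin N) ℝ)
    (lam : ℝ) (𝒮 : Finset (Fin N)) (b : Fin N → ℝ) : ℝ :=
  (∑ t, (y t - X.mulVec b t) ^ 2) / T + 2 * lam * ∑ j ∈ 𝒮ᶜ, |b j|

theorem wlasso_cone_bound {T N : ℕ} (hT : 0 < T)
    (X : Matrix (Fin T) (Fin N) ℝ) (β : Fin N → ℝ) (u y : Fin T → ℝ)
    (hy : y = fun t => X.mulVec β t + u t)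
    (lam : ℝ) (hlam : 0 < lam) (𝒮 S : Finset (Fin N)) (h𝒮S : 𝒮 ⊆ S)
    (βhat : Fin N → ℝ) (hmin : ∀ b, wlassoObj y X lam 𝒮 βhat ≤ wlassoObj y X lam 𝒮 b)
    (hEP : ∀ j, |∑ t, u t * X t j| ≤ T * lam / 4) :
    (∑ t, (X.mulVec (fun j => βhat j - β j) t) ^ 2) / T ≤
      (5 * lam / 4) * (∑ j ∈ S, |βhat j - β j|)
        - (3 * lam / 4) * (∑ j ∈ Sᶜ, |βhat j - β j|)
        + 2 * lam * (∑ j ∈ Sᶜ, |β j|) := by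
  have hTpos : (0:ℝ) < T := by exact_mod_cast hT
  set δ : Fin N → ℝ := fun j => βhat j - β j with hδ
  set v : Fin T → ℝ := X.mulVec δ with hv
  set C : ℝ := ∑ t, u t * v t with hC
  set V : ℝ := ∑ t, v t ^ 2 with hV
  set U : ℝ := ∑ t, u t ^ 2 with hU
  set Pβ : ℝ := ∑ j ∈ 𝒮ᶜ, |β j| with hPβ
  set Pβh : ℝ := ∑ j ∈ 𝒮ᶜ, |βhat j| with hPβh
  subst hy
  have hvt : ∀ t, v t = X.mulVec βhat t - X.mulVec β t := by
    intro t
    simp [hv, hδ, Matrix.mulVec, dotProduct, mul_sub, Finset.sum_sub_distrib]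
  -- key inequality from minimality, for every step size s ∈ (0,1]
  have key : ∀ s : ℝ, 0 < s → s ≤ 1 →
      (1 - s/2) * V ≤ C + lam * (Pβ - Pβh) * T := by
    intro s hs0 hs1
    have hb := hmin (fun j => βhat j - s * δ j)
    unfold wlassoObj at hb
    have hres1 : ∀ t, (X.mulVec β t + u t) - X.mulVec βhat t = u t - v t := by
      intro t; have := hvt t; linarith
    have hvt2 : ∀ t, X.mulVec (fun j => βhat j - s * δ j) t
        = X.mulVec βhat t - s * v t := by
      intro t
      simp only [hv, hδ, Matrix.mulVec, dotProduct, mul_sub, Finset.sum_sub_distrib,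
        Finset.mul_sum]
      simp only [mul_left_comm]
    have hres2 : ∀ t, (X.mulVec β t + u t) - X.mulVec (fun j => βhat j - s * δ j) t
        = u t - (1 - s) * v t := by
      intro t; rw [hvt2 t]; have := hvt t; linarith
    have e1 : ∑ t, ((X.mulVec β t + u t) - X.mulVec βhat t) ^ 2 = U - 2*C + V := by
      calc ∑ t, ((X.mulVec β t + u t) - X.mulVec βhat t) ^ 2
          = ∑ t, ((u t)^2 - 2*(u t * v t) + (v t)^2) :=
            Finset.sum_congr rfl fun t _ => by rw [hres1 t]; ring
        _ = U - 2*C + V := by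
            rw [Finset.sum_add_distrib, Finset.sum_sub_distrib, ← Finset.mul_sum]
    have e2 : ∑ t, ((X.mulVec β t + u t) - X.mulVec (fun j => βhat j - s * δ j) t) ^ 2
        = U - 2*(1-s)*C + (1-s)^2*V := by
      calc ∑ t, ((X.mulVec β t + u t) - X.mulVec (fun j => βhat j - s * δ j) t) ^ 2
          = ∑ t, ((u t)^2 - 2*(1-s)*(u t * v t) + (1-s)^2*(v t)^2) :=
            Finset.sum_congr rfl fun t _ => by rw [hres2 t]; ring
        _ = U - 2*(1-s)*C + (1-s)^2*V := by
            rw [Finset.sum_add_distrib, Finset.sum_sub_distrib, ← Finset.mul_sum,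
              ← Finset.mul_sum]
    have hpen : ∑ j ∈ 𝒮ᶜ, |βhat j - s * δ j| ≤ (1-s)*Pβh + s*Pβ := by
      rw [hPβh, hPβ, Finset.mul_sum, Finset.mul_sum, ← Finset.sum_add_distrib]
      refine Finset.sum_le_sum fun j _ => ?_
      have h1 : βhat j - s * δ j = (1-s)*βhat j + s*β j := by simp only [hδ]; ring
      rw [h1]
      refine (abs_add_le _ _).trans ?_
      rw [abs_mul, abs_mul, abs_of_nonneg (by linarith : (0:ℝ) ≤ 1 - s),
        abs_of_nonneg hs0.le]
    rw [e1, e2] at hb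
    have hb2 : (U - 2*C + V)/T + 2*lam*Pβh
        ≤ (U - 2*(1-s)*C + (1-s)^2*V)/T + 2*lam*((1-s)*Pβh + s*Pβ) := by
      refine hb.trans ?_
      have := mul_le_mul_of_nonneg_left hpen (by positivity : (0:ℝ) ≤ 2*lam)
      linarith
    have h3 : ((U - 2*C + V) - (U - 2*(1-s)*C + (1-s)^2*V))/T
        ≤ 2*lam*((1-s)*Pβh + s*Pβ) - 2*lam*Pβh := by
      rw [sub_div]; linarith
    rw [div_le_iff₀ hTpos] at h3
    nlinarith [h3, hs0, mul_pos hs0 hs0]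
  -- pass to the limit s → 0
  have hV0 : 0 ≤ V := Finset.sum_nonneg fun t _ => sq_nonneg _
  set A : ℝ := C + lam * (Pβ - Pβh) * T with hA
  have main : V ≤ A := by
    by_contra h
    push_neg at h
    have hhalf := key 1 one_pos le_rfl
    have hVpos : 0 < V := by nlinarith
    have hspos : 0 < min 1 ((V - A)/V) :=
      lt_min one_pos (div_pos (by linarith) hVpos)
    have hk := key _ hspos (min_le_left _ _)
    have hsv : min 1 ((V - A)/V) * V ≤ V - A :=
      (le_div_iff₀ hVpos).1 (min_le_right _ _)
    nlinarith [hk, hsv]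
  -- bound the cross term
  have hCross : C ≤ (∑ j, |δ j|) * (T*lam/4) := by
    have e : C = ∑ j, δ j * (∑ t, u t * X t j) := by
      calc C = ∑ t, ∑ j, u t * (X t j * δ j) := by
            simp only [hC, hv, Matrix.mulVec, dotProduct, Finset.mul_sum]
        _ = ∑ j, ∑ t, u t * (X t j * δ j) := Finset.sum_comm
        _ = ∑ j, δ j * (∑ t, u t * X t j) := by
            refine Finset.sum_congr rfl fun j _ => ?_
            rw [Finset.mul_sum]
            exact Finset.sum_congr rfl fun t _ => by ring
    calc C = ∑ j, δ j * (∑ t, u t * X t j) := e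
      _ ≤ ∑ j, |δ j * (∑ t, u t * X t j)| :=
          Finset.sum_le_sum fun j _ => le_abs_self _
      _ = ∑ j, |δ j| * |∑ t, u t * X t j| := by
          exact Finset.sum_congr rfl fun j _ => abs_mul _ _
      _ ≤ ∑ j, |δ j| * (T*lam/4) :=
          Finset.sum_le_sum fun j _ =>
            mul_le_mul_of_nonneg_left (hEP j) (abs_nonneg _)
      _ = (∑ j, |δ j|) * (T*lam/4) := by rw [Finset.sum_mul]
  -- bound the penalty difference
  have hPen : Pβ - Pβh ≤ (∑ j ∈ S, |δ j|) + 2*(∑ j ∈ Sᶜ, |β j|) - (∑ j ∈ Sᶜ, |δ j|) := by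
    have hunion : 𝒮ᶜ = (S \ 𝒮) ∪ Sᶜ := by
      ext j; simp only [Finset.mem_compl, Finset.mem_union, Finset.mem_sdiff]
      constructor
      · intro hj; by_cases h : j ∈ S
        · exact Or.inl ⟨h, hj⟩
        · exact Or.inr h
      · rintro (⟨_, hj⟩ | hj)
        · exact hj
        · exact fun h => hj (h𝒮S h)
    have hdisj : Disjoint (S \ 𝒮) Sᶜ := by
      refine Finset.disjoint_left.2 fun j hj hj' => ?_
      exact (Finset.mem_compl.1 hj') (Finset.mem_sdiff.1 hj).1
    have e : Pβ - Pβh = ∑ j ∈ (S \ 𝒮), (|β j| - |βhat j|) + ∑ j ∈ Sᶜ, (|β j| - |βhat j|) := by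
      rw [hPβ, hPβh, ← Finset.sum_sub_distrib, hunion, Finset.sum_union hdisj]
    rw [e]
    have b1 : ∑ j ∈ (S \ 𝒮), (|β j| - |βhat j|) ≤ ∑ j ∈ S, |δ j| := by
      calc ∑ j ∈ (S \ 𝒮), (|β j| - |βhat j|) ≤ ∑ j ∈ (S \ 𝒮), |δ j| :=
            Finset.sum_le_sum fun j _ => by
              have := abs_sub_abs_le_abs_sub (β j) (βhat j)
              have h2 : |β j - βhat j| = |δ j| := by rw [hδ]; rw [abs_sub_comm]
              linarith
        _ ≤ ∑ j ∈ S, |δ j| :=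
            Finset.sum_le_sum_of_subset_of_nonneg (Finset.sdiff_subset)
              fun j _ _ => abs_nonneg _
    have b2 : ∑ j ∈ Sᶜ, (|β j| - |βhat j|) ≤ 2*(∑ j ∈ Sᶜ, |β j|) - ∑ j ∈ Sᶜ, |δ j| := by
      rw [Finset.mul_sum, ← Finset.sum_sub_distrib]
      refine Finset.sum_le_sum fun j _ => ?_
      have h1 : |δ j| ≤ |βhat j| + |β j| := by
        rw [hδ]; exact (abs_sub _ _)
      linarith
    linarith
  -- assemble
  have hsplit : (∑ j, |δ j|) = (∑ j ∈ S, |δ j|) + (∑ j ∈ Sᶜ, |δ j|) :=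
    (Finset.sum_add_sum_compl S _).symm
  rw [div_le_iff₀ hTpos]
  have hPen' : lam * (Pβ - Pβh) * T
      ≤ lam * ((∑ j ∈ S, |δ j|) + 2*(∑ j ∈ Sᶜ, |β j|) - (∑ j ∈ Sᶜ, |δ j|)) * T := by
    have := mul_le_mul_of_nonneg_left hPen hlam.le
    exact mul_le_mul_of_nonneg_right this hTpos.le
  rw [hsplit] at hCross
  nlinarith [main, hCross, hPen', hTpos, hlam]
end
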